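/- The Barnes zeta function ζ_B(s,a) = Σ_{n≥0} C(d+n-1,n)(n+a)^{-s} (with d ≥ 3) has residue at s = d-2 equal to (12a² - d - 12ad + 3d²)/(24(d-3)!). -/

import Mathlib

/-!
Since `(d-1)! * C(d+n-1, n) = (n+1)⋯(n+d-1)` is a polynomial `Q` of degree `d-1` in `n + a`,
the Barnes zeta function equals `∑ⱼ Qⱼ ζ(s - j, a) / (d-1)!`, a combination of shifted Hurwitz
zeta functions: first as Dirichlet series on `Re s > d`, then by the identity theorem off the
poles `s = 1, …, d`. Only the term `j = d - 3` has a pole at `s = d - 2`, so the residue there is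
`Q_{d-3} / (d-1)!`. That coefficient is the second elementary symmetric function of the roots
`i + 1 - a` of `Q`, which the power sums `∑ (i + 1 - a)` and `∑ (i + 1 - a)²` determine.
-/

open Filter Topology Polynomial Finset
open scoped Nat

namespace Polynomial

variable {R : Type*} [CommRing R]

theorem coeff_mul_X_add_C_succ (p : R[X]) (c : R) (k : ℕ) :
    (p * (X + C c)).coeff (k + 1) = p.coeff k + c * p.coeff (k + 1) := by
  rw [mul_add, coeff_add, coeff_mul_X, coeff_mul_C, mul_comm]

theorem coeff_prod_range_X_add_C_sub_one (r : ℕ → R) (m : ℕ) :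
    (∏ i ∈ range (m + 1), (X + C (r i))).coeff m = ∑ i ∈ range (m + 1), r i := by
  rw [Finset.prod_X_add_C_coeff _ _ (by simp)]
  simp [powersetCard_one]

theorem two_mul_coeff_prod_range_X_add_C_sub_two (r : ℕ → R) (m : ℕ) :
    2 * (∏ i ∈ range (m + 2), (X + C (r i))).coeff m =
      (∑ i ∈ range (m + 2), r i) ^ 2 - ∑ i ∈ range (m + 2), r i ^ 2 := by
  induction m with
  | zero => simp [sum_range_succ, prod_range_succ, coeff_zero_eq_eval_zero]; ring
  | succ m ih =>
    rw [prod_range_succ, coeff_mul_X_add_C_succ, mul_add, ih, coeff_prod_range_X_add_C_sub_one,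
      sum_range_succ _ (m + 2), sum_range_succ _ (m + 2)]
    ring

end Polynomial

theorem Set.Finite.eventually_notMem_nhdsNE {X : Type*} [TopologicalSpace X] [T1Space X]
    {F : Set X} (hF : F.Finite) (p : X) : ∀ᶠ x in 𝓝[≠] p, x ∉ F := by
  have h := mem_codiscreteWithin_iff_forall_mem_nhdsNE.mp hF.compl_mem_codiscrete p trivial
  rwa [Set.compl_univ, Set.union_empty] at h

theorem AnalyticOnNhd.eqOn_compl_of_finite {E : Type*} [NormedAddCommGroup E] [NormedSpace ℂ E]
    {f g : ℂ → E} {F : Set ℂ} (hF : F.Finite) (hf : AnalyticOnNhd ℂ f Fᶜ)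
    (hg : AnalyticOnNhd ℂ g Fᶜ) {z₀ : ℂ} (hz₀ : z₀ ∉ F) (hfg : f =ᶠ[𝓝 z₀] g) : Set.EqOn f g Fᶜ :=
  have hconn : IsPreconnected Fᶜ := (hF.countable.isConnected_compl_of_one_lt_rank
    (by rw [Complex.rank_real_complex]; exact Cardinal.one_lt_two)).isPreconnected
  hf.eqOn_of_preconnected_of_eventuallyEq hg hconn hz₀ hfg

theorem AnalyticOnNhd.eventuallyEq_nhdsNE_of_eq_of_lt_re {E : Type*} [NormedAddCommGroup E]
    [NormedSpace ℂ E] {f g : ℂ → E} {F : Set ℂ} (hF : F.Finite) (hf : AnalyticOnNhd ℂ f Fᶜ)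
    (hg : AnalyticOnNhd ℂ g Fᶜ) {σ : ℝ} (hfg : ∀ s : ℂ, σ < s.re → f s = g s) {z₀ : ℂ}
    (hz₀ : z₀ ∉ F) (hσ : σ < z₀.re) (p : ℂ) : f =ᶠ[𝓝[≠] p] g := by
  have hz₀' : f =ᶠ[𝓝 z₀] g :=
    eventually_of_mem ((isOpen_lt continuous_const Complex.continuous_re).mem_nhds hσ) hfg
  filter_upwards [hF.eventually_notMem_nhdsNE p] with s hs
  exact hf.eqOn_compl_of_finite hF hg hz₀ hz₀' hs

/-- Mathlib's `hurwitzZeta a` is given by the Dirichlet series `∑ (n + a) ^ (-s)` only for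
`0 ≤ a ≤ 1`; larger `a` are reached by removing initial terms. -/
structure IsHurwitzZetaContinuation (a : ℝ) (Z : ℂ → ℂ) : Prop where
  hasSum : ∀ s : ℂ, 1 < s.re → HasSum (fun n : ℕ => ((n : ℂ) + a) ^ (-s)) (Z s)
  differentiableAt : ∀ s : ℂ, s ≠ 1 → DifferentiableAt ℂ Z s
  residue_one : Tendsto (fun s => (s - 1) * Z s) (𝓝[≠] 1) (𝓝 1)

theorem isHurwitzZetaContinuation_hurwitzZeta {a : ℝ} (ha : a ∈ Set.Icc 0 1) :
    IsHurwitzZetaContinuation a (HurwitzZeta.hurwitzZeta a) where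
  hasSum s hs := by
    simpa only [Complex.cpow_neg, one_div] using HurwitzZeta.hasSum_hurwitzZeta_of_one_lt_re ha hs
  differentiableAt _ hs := HurwitzZeta.differentiableAt_hurwitzZeta _ hs
  residue_one := HurwitzZeta.hurwitzZeta_residue_one _

theorem IsHurwitzZetaContinuation.add_one {a : ℝ} {Z : ℂ → ℂ} (hZ : IsHurwitzZetaContinuation a Z)
    (ha : a ≠ 0) : IsHurwitzZetaContinuation (a + 1) (fun s => Z s - (a : ℂ) ^ (-s)) where
  hasSum s hs := by
    have := (hasSum_nat_add_iff' 1).mpr (hZ.hasSum s hs)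
    simpa [add_right_comm, add_assoc] using this
  differentiableAt s hs :=
    (hZ.differentiableAt s hs).sub
      ((differentiableAt_neg_iff.mpr differentiableAt_id).const_cpow (.inl (by exact_mod_cast ha)))
  residue_one := by
    have hcont : Continuous fun s : ℂ => (s - 1) * (a : ℂ) ^ (-s) :=
      (continuous_sub_right 1).mul (continuous_neg.const_cpow (.inl (by exact_mod_cast ha)))
    have := hZ.residue_one.sub ((hcont.tendsto 1).mono_left nhdsWithin_le_nhds)
    simpa [mul_sub] using this

theorem exists_isHurwitzZetaContinuation {a : ℝ} (ha : 0 ≤ a) :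
    ∃ Z, IsHurwitzZetaContinuation a Z := by
  obtain ⟨n, hn⟩ := exists_nat_ge a
  induction n generalizing a with
  | zero => exact ⟨_, isHurwitzZetaContinuation_hurwitzZeta ⟨ha, by simp at hn; linarith⟩⟩
  | succ n ih =>
    rcases le_or_gt a 1 with h1 | h1
    · exact ⟨_, isHurwitzZetaContinuation_hurwitzZeta ⟨ha, h1⟩⟩
    obtain ⟨Z, hZ⟩ := ih (a := a - 1) (by linarith) (by push_cast at hn; linarith)
    exact ⟨_, by simpa using hZ.add_one (by linarith)⟩

namespace IsHurwitzZetaContinuation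

variable {a : ℝ} {Z : ℂ → ℂ}

theorem tendsto_sub_mul_comp_sub_of_ne (hZ : IsHurwitzZetaContinuation a Z) {p w : ℂ}
    (hpw : p - w ≠ 1) : Tendsto (fun s => (s - p) * Z (s - w)) (𝓝[≠] p) (𝓝 0) := by
  have hcont : ContinuousAt (fun s => (s - p) * Z (s - w)) p :=
    (continuousAt_id.sub continuousAt_const).mul
      ((hZ.differentiableAt _ hpw).continuousAt.comp (f := fun s => s - w)
        (continuousAt_id.sub continuousAt_const))
  simpa using hcont.tendsto.mono_left nhdsWithin_le_nhds

theorem tendsto_sub_mul_comp_sub (hZ : IsHurwitzZetaContinuation a Z) (w : ℂ) :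
    Tendsto (fun s => (s - (w + 1)) * Z (s - w)) (𝓝[≠] (w + 1)) (𝓝 1) := by
  have hshift : Tendsto (fun s => s - w) (𝓝[≠] (w + 1)) (𝓝[≠] 1) := by
    refine tendsto_nhdsWithin_iff.mpr ⟨?_, ?_⟩
    · simpa using ((continuous_sub_right w).tendsto (w + 1)).mono_left nhdsWithin_le_nhds
    · filter_upwards [self_mem_nhdsWithin] with s hs
      simpa [sub_eq_iff_eq_add, add_comm] using hs
  convert hZ.residue_one.comp hshift using 2 with s
  simp only [Function.comp_apply]
  ring

theorem tendsto_sub_mul_sum (hZ : IsHurwitzZetaContinuation a Z) (c : ℕ → ℂ) {N e : ℕ}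
    (he : e < N) :
    Tendsto (fun s => (s - (e + 1)) * ∑ j ∈ range N, c j * Z (s - j)) (𝓝[≠] ((e : ℂ) + 1))
      (𝓝 (c e)) := by
  simp_rw [mul_sum, mul_left_comm _ (c _)]
  rw [← sum_ite_eq_of_mem' (range N) e (fun _ => c e) (mem_range.mpr he)]
  refine tendsto_finsetSum _ fun j _ => ?_
  rcases eq_or_ne j e with rfl | hje
  · simpa using (hZ.tendsto_sub_mul_comp_sub j).const_mul (c j)
  · have hpw : (e : ℂ) + 1 - j ≠ 1 := by
      rw [add_sub_right_comm, Ne, add_eq_right, sub_eq_zero]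
      exact_mod_cast hje.symm
    simpa [hje] using (hZ.tendsto_sub_mul_comp_sub_of_ne hpw).const_mul (c j)

theorem differentiableAt_sum (hZ : IsHurwitzZetaContinuation a Z) (c : ℕ → ℂ) {N : ℕ} {s : ℂ}
    (hs : ∀ j < N, s ≠ j + 1) :
    DifferentiableAt ℂ (fun s => ∑ j ∈ range N, c j * Z (s - j)) s := by
  refine DifferentiableAt.fun_sum fun j hj => (DifferentiableAt.const_mul ?_ _)
  refine (hZ.differentiableAt _ ?_).comp s (differentiableAt_id.sub_const _)
  rw [Ne, sub_eq_iff_eq_add, add_comm]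
  exact hs j (mem_range.mp hj)

theorem hasSum_eval_mul_cpow (hZ : IsHurwitzZetaContinuation a Z) (ha : 0 < a) (P : ℂ[X])
    {s : ℂ} (hs : (P.natDegree : ℝ) + 1 < s.re) :
    HasSum (fun n : ℕ => P.eval ((n : ℂ) + a) * ((n : ℂ) + a) ^ (-s))
      (∑ j ∈ range (P.natDegree + 1), P.coeff j * Z (s - j)) := by
  have hterm : ∀ j ∈ range (P.natDegree + 1),
      HasSum (fun n : ℕ => P.coeff j * ((n : ℂ) + a) ^ (-(s - j))) (P.coeff j * Z (s - j)) := by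
    intro j hj
    have hj : (j : ℝ) ≤ P.natDegree := by exact_mod_cast Nat.lt_succ_iff.mp (mem_range.mp hj)
    exact (hZ.hasSum _ (by simp; linarith)).mul_left _
  convert hasSum_sum hterm using 2 with n
  have hna : (n : ℂ) + a ≠ 0 := by exact_mod_cast (by positivity : (n : ℝ) + a ≠ 0)
  rw [eval_eq_sum_range, sum_mul]
  refine sum_congr rfl fun j _ => ?_
  rw [neg_sub, sub_eq_add_neg, Complex.cpow_add _ _ hna, Complex.cpow_natCast, mul_assoc]

end IsHurwitzZetaContinuation

noncomputable def barnesPoly (m : ℕ) (a : ℂ) : ℂ[X] := ∏ i ∈ range m, (X + C ((i : ℂ) + 1 - a))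

theorem natDegree_barnesPoly (m : ℕ) (a : ℂ) : (barnesPoly m a).natDegree = m := by
  rw [barnesPoly, natDegree_prod_of_monic _ _ fun i _ => monic_X_add_C _]
  simp only [natDegree_X_add_C, sum_const, card_range, smul_eq_mul, mul_one]

theorem choose_mul_factorial_eq_eval_barnesPoly (m n : ℕ) (a : ℂ) :
    ((m + n).choose n : ℂ) * m ! = (barnesPoly m a).eval (n + a) := by
  have h := Nat.ascFactorial_eq_factorial_mul_choose n m
  rw [Nat.ascFactorial_eq_prod_range, add_comm n m] at h
  rw [← Nat.choose_symm_add, mul_comm, ← Nat.cast_mul, ← h, barnesPoly, eval_prod]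
  push_cast
  exact prod_congr rfl fun i _ => by simp; ring

theorem IsHurwitzZetaContinuation.hasSum_choose_mul_cpow {a : ℝ} {Z : ℂ → ℂ}
    (hZ : IsHurwitzZetaContinuation a Z) (ha : 0 < a) (m : ℕ) {s : ℂ} (hs : (m : ℝ) + 1 < s.re) :
    HasSum (fun n : ℕ => ((m + n).choose n : ℂ) * ((n : ℂ) + a) ^ (-s))
      ((∑ j ∈ range (m + 1), (barnesPoly m a).coeff j * Z (s - j)) / m !) := by
  have hfac : (m ! : ℂ) ≠ 0 := Nat.cast_ne_zero.mpr (Nat.factorial_ne_zero _)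
  have hP := hZ.hasSum_eval_mul_cpow ha (barnesPoly m a) (s := s)
  rw [natDegree_barnesPoly] at hP
  refine (hP hs).div_const _ |>.congr_fun fun n => ?_
  rw [← choose_mul_factorial_eq_eval_barnesPoly]
  field_simp

theorem coeff_barnesPoly_sub_two (e : ℕ) (a : ℂ) :
    24 * (barnesPoly (e + 2) a).coeff e =
      (e + 2) * (e + 1) * (12 * a ^ 2 - (e + 3) - 12 * a * (e + 3) + 3 * (e + 3) ^ 2) := by
  have hsum : ∀ m : ℕ, 2 * ∑ i ∈ range m, ((i : ℂ) + 1 - a) = m * (m + 1) - 2 * m * a := by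
    intro m
    induction m with
    | zero => simp
    | succ m ih => rw [sum_range_succ, mul_add, ih]; push_cast; ring
  have hsumSq : ∀ m : ℕ, 6 * ∑ i ∈ range m, ((i : ℂ) + 1 - a) ^ 2 =
      m * (m + 1) * (2 * m + 1) - 6 * a * m * (m + 1) + 6 * m * a ^ 2 := by
    intro m
    induction m with
    | zero => simp
    | succ m ih => rw [sum_range_succ, mul_add, ih]; push_cast; ring
  have hcoeff := two_mul_coeff_prod_range_X_add_C_sub_two (fun i => (i : ℂ) + 1 - a) e
  rw [← barnesPoly] at hcoeff
  have hS := hsum (e + 2)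
  have hT := hsumSq (e + 2)
  push_cast at hS hT
  linear_combination 12 * hcoeff + 3 * (2 * ∑ i ∈ range (e + 2), ((i : ℂ) + 1 - a) +
    ((e + 2) * (e + 2 + 1) - 2 * (e + 2) * a)) * hS - 2 * hT

theorem coeff_barnesPoly_sub_two_div_factorial (e : ℕ) (a : ℂ) :
    (barnesPoly (e + 2) a).coeff e / (e + 2)! =
      (12 * a ^ 2 - (e + 3) - 12 * a * (e + 3) + 3 * (e + 3) ^ 2) / (24 * e !) := by
  have hfac : (e ! : ℂ) ≠ 0 := Nat.cast_ne_zero.mpr (Nat.factorial_ne_zero _)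
  have he1 : (e : ℂ) + 1 ≠ 0 := by exact_mod_cast Nat.succ_ne_zero e
  have he2 : (e : ℂ) + 2 ≠ 0 := by exact_mod_cast Nat.succ_ne_zero (e + 1)
  rw [Nat.factorial_succ, Nat.factorial_succ]
  push_cast
  rw [eq_div_iff (by simpa using hfac), show (e : ℂ) + 1 + 1 = e + 2 by ring]
  field_simp
  linear_combination coeff_barnesPoly_sub_two e a

/-- The Barnes zeta function ζ_B(s,a) = Σ_{n≥0} C(d+n-1,n)(n+a)^{-s} (d ≥ 3, a > 0)
has residue (12a² - d - 12ad + 3d²)/(24(d-3)!) at s = d-2. -/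
theorem barnes_zeta_residue_d_sub_two (d : ℕ) (hd : 3 ≤ d) (a : ℝ) (ha : 0 < a)
    (f : ℂ → ℂ)
    (hsum : ∀ s : ℂ, (d : ℝ) < s.re →
      HasSum (fun n : ℕ => ((d + n - 1).choose n : ℂ) * ((n : ℂ) + (a : ℂ)) ^ (-s)) (f s))
    (hanal : ∀ s : ℂ, (∀ k : ℕ, 1 ≤ k → k ≤ d → s ≠ (k : ℂ)) → AnalyticAt ℂ f s) :
    Tendsto (fun s : ℂ => (s - ((d : ℂ) - 2)) * f s) (𝓝[≠] ((d : ℂ) - 2))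
      (𝓝 ((12 * (a : ℂ) ^ 2 - (d : ℂ) - 12 * (a : ℂ) * (d : ℂ) + 3 * (d : ℂ) ^ 2) /
        (24 * ((d - 3).factorial : ℂ)))) := by
  obtain ⟨e, rfl⟩ : ∃ e, d = e + 3 := ⟨d - 3, by omega⟩
  obtain ⟨Z, hZ⟩ := exists_isHurwitzZetaContinuation ha.le
  set g : ℂ → ℂ := fun s =>
    (∑ j ∈ range (e + 3), (barnesPoly (e + 2) a).coeff j * Z (s - j)) / (e + 2)!
  set F : Set ℂ := (fun k : ℕ => (k : ℂ)) '' Set.Icc 1 (e + 3)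
  have hF : F.Finite := (Set.finite_Icc _ _).image _
  have hf : AnalyticOnNhd ℂ f Fᶜ := fun s hs =>
    hanal s fun k hk1 hk2 hsk => hs ⟨k, ⟨hk1, hk2⟩, hsk.symm⟩
  have hg : AnalyticOnNhd ℂ g Fᶜ := by
    refine DifferentiableOn.analyticOnNhd (fun s hs => ?_) hF.isClosed.isOpen_compl
    refine ((hZ.differentiableAt_sum _ fun j hj hsj => hs ?_).div_const _).differentiableWithinAt
    exact ⟨j + 1, ⟨by omega, by omega⟩, by simp [hsj]⟩
  have hfg_half : ∀ s : ℂ, ((e + 3 : ℕ) : ℝ) < s.re → f s = g s := fun s hs =>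
    (hsum s hs).unique <| by
      convert hZ.hasSum_choose_mul_cpow ha (e + 2) (by push_cast at hs ⊢; linarith) using 5 with n
      omega
  have hz₀ : ((e + 4 : ℕ) : ℂ) ∉ F := fun ⟨k, hk, hke⟩ => by
    have : k = e + 4 := Nat.cast_injective hke
    exact absurd hk.2 (by omega)
  have hfg := hf.eventuallyEq_nhdsNE_of_eq_of_lt_re hF hg hfg_half hz₀ (by norm_num) ((e : ℂ) + 1)
  have hlim := (hZ.tendsto_sub_mul_sum (fun j => (barnesPoly (e + 2) a).coeff j)
    (show e < e + 3 by omega)).div_const ((e + 2)! : ℂ)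
  rw [coeff_barnesPoly_sub_two_div_factorial] at hlim
  have hp : ((e + 3 : ℕ) : ℂ) - 2 = (e : ℂ) + 1 := by push_cast; ring
  rw [hp, show e + 3 - 3 = e by omega]
  push_cast
  refine hlim.congr' (hfg.mono fun s hs => ?_)
  simp only [hs, g]
  ring
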